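/- Performance-difference-type identity for the square value: for any bounded f : S → ℝ, J_S(π) = ⟨ρ, f⟩ + (1/(1−γ²))·⟨d₂^π, δ_f^π⟩, where δ_f^π(s) = E_{π,P}[C(s,a,s')² + γ²f(s') − f(s) + 2γ·C(s,a,s')·V_C^π(s')] and d₂^π(s) = (1−γ²)·Σ_{t=0}^∞ γ^{2t}·P(s_t = s | ρ, π). -/

import Mathlib

/-!
Passing to the limit in the one-step recursion for the finite-horizon second moments gives the
Bellman equation `S(s) = E[C² + 2γ C V(s') + γ² S(s')]`. Hence, with `g = S - f`, the expected
increment is `δ_f = g - γ² P^π g`. Against the state marginals `m_t` this sums to the telescoping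
series `Σ_t γ^{2t} (⟨m_t, g⟩ - γ² ⟨m_{t+1}, g⟩) = ⟨m_0, g⟩ = ⟨ρ, S - f⟩`.
-/

open Finset

/-- The state at time `t` along a trajectory starting at `s0` whose `t`-th transition is
`w t = (aₜ, sₜ₊₁)`. -/
def stSeq {S A : Type*} (s0 : S) (w : ℕ → A × S) : ℕ → S
  | 0 => s0
  | t + 1 => (w t).2

/-- Extend a finite path `w : Fin n → A × S` to an infinite sequence by a default value. -/
def extPath {S A : Type*} [Inhabited S] [Inhabited A] (n : ℕ) (w : Fin n → A × S) :
    ℕ → A × S :=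
  fun t => if h : t < n then w ⟨t, h⟩ else default

/-- Probability weight of the first `n` steps of the trajectory `w` from `s0` under policy
`π` and transition kernel `P`. -/
def pathWt {S A : Type*} (π : S → A → ℝ) (P : S → A → S → ℝ) (s0 : S)
    (w : ℕ → A × S) (n : ℕ) : ℝ :=
  ∏ t ∈ Finset.range n, π (stSeq s0 w t) (w t).1 * P (stSeq s0 w t) (w t).1 (w t).2

/-- Discounted cost accumulated over the first `n` steps of the trajectory `w` from `s0`. -/
def pathCost {S A : Type*} (C : S → A → S → ℝ) (γ : ℝ) (s0 : S)
    (w : ℕ → A × S) (n : ℕ) : ℝ :=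
  ∑ t ∈ Finset.range n, γ ^ t * C (stSeq s0 w t) (w t).1 (w t).2

/-- `n`-horizon expectation of the discounted cost sum from `s0`. -/
def cExp {S A : Type*} [Fintype S] [Fintype A] [Inhabited S] [Inhabited A]
    (π : S → A → ℝ) (P : S → A → S → ℝ) (C : S → A → S → ℝ) (γ : ℝ)
    (n : ℕ) (s0 : S) : ℝ :=
  ∑ w : Fin n → A × S,
    pathWt π P s0 (extPath n w) n * pathCost C γ s0 (extPath n w) n

/-- `n`-horizon expectation of the squared discounted cost sum from `s0`. -/
def sqExp {S A : Type*} [Fintype S] [Fintype A] [Inhabited S] [Inhabited A]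
    (π : S → A → ℝ) (P : S → A → S → ℝ) (C : S → A → S → ℝ) (γ : ℝ)
    (n : ℕ) (s0 : S) : ℝ :=
  ∑ w : Fin n → A × S,
    pathWt π P s0 (extPath n w) n * (pathCost C γ s0 (extPath n w) n) ^ 2


lemma sum_pi_fin_succ_prod {α β M : Type*} [Fintype α] [Fintype β] [AddCommMonoid M] (n : ℕ)
    (F : (Fin (n + 1) → α × β) → M) :
    ∑ w : Fin (n + 1) → α × β, F w
      = ∑ a : α, ∑ b : β, ∑ w : Fin n → α × β, F (Fin.cons (a, b) w) := by
  rw [← (Fin.consEquiv fun _ => α × β).sum_comp F, Fintype.sum_prod_type, Fintype.sum_prod_type]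
  rfl

section Trajectory

variable {S A : Type*} [Inhabited S] [Inhabited A]

lemma extPath_cons_zero (n : ℕ) (p : A × S) (w : Fin n → A × S) :
    extPath (n + 1) (Fin.cons p w) 0 = p := by
  simp [extPath]

lemma extPath_cons_succ (n : ℕ) (p : A × S) (w : Fin n → A × S) {t : ℕ} (h : t < n) :
    extPath (n + 1) (Fin.cons p w) (t + 1) = extPath n w t := by
  simp only [extPath, dif_pos (Nat.succ_lt_succ h), dif_pos h]
  exact Fin.cons_succ (α := fun _ : Fin (n + 1) => A × S) p w ⟨t, h⟩

lemma stSeq_extPath_cons_succ (n : ℕ) (s0 : S) (a : A) (s' : S) (w : Fin n → A × S) {t : ℕ}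
    (h : t < n) :
    stSeq s0 (extPath (n + 1) (Fin.cons (a, s') w)) (t + 1) = stSeq s' (extPath n w) t := by
  cases t with
  | zero => simp [stSeq, extPath_cons_zero]
  | succ k => simp only [stSeq, extPath_cons_succ n _ w (Nat.lt_of_succ_lt h)]

lemma pathWt_extPath_cons (π : S → A → ℝ) (P : S → A → S → ℝ) (n : ℕ) (s0 : S) (a : A)
    (s' : S) (w : Fin n → A × S) :
    pathWt π P s0 (extPath (n + 1) (Fin.cons (a, s') w)) (n + 1)
      = π s0 a * P s0 a s' * pathWt π P s' (extPath n w) n := by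
  rw [pathWt, prod_range_succ', mul_comm]
  congr 1
  refine prod_congr rfl fun t ht => ?_
  have h := mem_range.mp ht
  rw [stSeq_extPath_cons_succ n s0 a s' w h, extPath_cons_succ n _ w h]

lemma pathCost_extPath_cons (C : S → A → S → ℝ) (γ : ℝ) (n : ℕ) (s0 : S) (a : A) (s' : S)
    (w : Fin n → A × S) :
    pathCost C γ s0 (extPath (n + 1) (Fin.cons (a, s') w)) (n + 1)
      = C s0 a s' + γ * pathCost C γ s' (extPath n w) n := by
  rw [pathCost, sum_range_succ', add_comm, pathCost, mul_sum]
  congr 1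
  · simp [stSeq, extPath_cons_zero]
  · refine sum_congr rfl fun t ht => ?_
    have h := mem_range.mp ht
    rw [stSeq_extPath_cons_succ n s0 a s' w h, extPath_cons_succ n _ w h, pow_succ]
    ring

variable [Fintype S] [Fintype A] (π : S → A → ℝ) (P : S → A → S → ℝ) (C : S → A → S → ℝ) (γ : ℝ)

lemma sum_pathWt_mul_succ (φ : ℝ → ℝ) (n : ℕ) (s0 : S) :
    ∑ w : Fin (n + 1) → A × S,
        pathWt π P s0 (extPath (n + 1) w) (n + 1) * φ (pathCost C γ s0 (extPath (n + 1) w) (n + 1))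
      = ∑ a, π s0 a * ∑ s', P s0 a s' * ∑ w : Fin n → A × S,
          pathWt π P s' (extPath n w) n * φ (C s0 a s' + γ * pathCost C γ s' (extPath n w) n) := by
  simp only [sum_pi_fin_succ_prod, pathWt_extPath_cons, pathCost_extPath_cons, mul_sum, mul_assoc]

lemma sum_pathWt_eq_one (hπ1 : ∀ s, ∑ a, π s a = 1) (hP1 : ∀ s a, ∑ s', P s a s' = 1)
    (n : ℕ) (s0 : S) : ∑ w : Fin n → A × S, pathWt π P s0 (extPath n w) n = 1 := by
  induction n generalizing s0 with
  | zero => simp [pathWt]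
  | succ n ih =>
    simpa [ih, hP1, hπ1] using sum_pathWt_mul_succ π P 0 0 (fun _ => 1) n s0

variable {π P}

lemma sqExp_succ (hπ1 : ∀ s, ∑ a, π s a = 1) (hP1 : ∀ s a, ∑ s', P s a s' = 1) (n : ℕ) (s0 : S) :
    sqExp π P C γ (n + 1) s0
      = ∑ a, π s0 a * ∑ s', P s0 a s' *
          (C s0 a s' ^ 2 + 2 * γ * C s0 a s' * cExp π P C γ n s' + γ ^ 2 * sqExp π P C γ n s') := by
  rw [sqExp, sum_pathWt_mul_succ π P C γ (fun x => x ^ 2)]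
  refine sum_congr rfl fun a _ => congrArg _ (sum_congr rfl fun s' _ => congrArg _ ?_)
  calc _ = ∑ w : Fin n → A × S, (C s0 a s' ^ 2 * pathWt π P s' (extPath n w) n
          + 2 * γ * C s0 a s' * (pathWt π P s' (extPath n w) n * pathCost C γ s' (extPath n w) n)
          + γ ^ 2 * (pathWt π P s' (extPath n w) n * pathCost C γ s' (extPath n w) n ^ 2)) :=
        sum_congr rfl fun _ _ => by ring
    _ = _ := by rw [sum_add_distrib, sum_add_distrib, ← mul_sum, ← mul_sum, ← mul_sum,
          sum_pathWt_eq_one π P hπ1 hP1, mul_one, cExp, sqExp]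

end Trajectory

section Bellman

variable {S A : Type*} [Fintype S] [Fintype A] [Inhabited S] [Inhabited A]
  {π : S → A → ℝ} {P : S → A → S → ℝ} (C : S → A → S → ℝ) (γ : ℝ)

theorem sqValue_bellman (hπ1 : ∀ s, ∑ a, π s a = 1) (hP1 : ∀ s a, ∑ s', P s a s' = 1)
    {VC SC : S → ℝ}
    (hVC : ∀ s, Filter.Tendsto (fun n => cExp π P C γ n s) Filter.atTop (nhds (VC s)))
    (hSC : ∀ s, Filter.Tendsto (fun n => sqExp π P C γ n s) Filter.atTop (nhds (SC s)))
    (s : S) :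
    SC s = ∑ a, π s a * ∑ s', P s a s' *
      (C s a s' ^ 2 + 2 * γ * C s a s' * VC s' + γ ^ 2 * SC s') := by
  refine tendsto_nhds_unique ((hSC s).comp (Filter.tendsto_add_atTop_nat 1)) ?_
  simp only [Function.comp_def, sqExp_succ C γ hπ1 hP1]
  refine tendsto_finsetSum _ fun a _ => .const_mul _ <|
    tendsto_finsetSum _ fun s' _ => .const_mul _ ?_
  exact (tendsto_const_nhds.add ((hVC s').const_mul _)).add ((hSC s').const_mul _)

end Bellman

theorem tsum_sub_succ {G : Type*} [AddCommGroup G] [TopologicalSpace G] [IsTopologicalAddGroup G]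
    [T2Space G] {f : ℕ → G} (hf : Summable f) : ∑' t, (f t - f (t + 1)) = f 0 := by
  rw [hf.tsum_sub ((summable_nat_add_iff 1).mpr hf), hf.tsum_eq_zero_add]
  abel

section MarkovChain

variable {S : Type*} [Fintype S] {K : S → S → ℝ} {m : ℕ → S → ℝ}

lemma markovIterate_nonneg (hK0 : ∀ s s', 0 ≤ K s s')
    (hm : ∀ t s', m (t + 1) s' = ∑ s, m t s * K s s') (hm0 : ∀ s, 0 ≤ m 0 s) (t : ℕ) (s : S) :
    0 ≤ m t s := by
  induction t generalizing s with
  | zero => exact hm0 s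
  | succ t ih => rw [hm]; exact sum_nonneg fun s' _ => mul_nonneg (ih s') (hK0 s' s)

lemma sum_markovIterate (hK1 : ∀ s, ∑ s', K s s' = 1)
    (hm : ∀ t s', m (t + 1) s' = ∑ s, m t s * K s s') (t : ℕ) : ∑ s, m t s = ∑ s, m 0 s := by
  induction t with
  | zero => rfl
  | succ t ih => simp only [hm, ← ih]; rw [sum_comm]; simp only [← mul_sum, hK1, mul_one]

lemma sum_markovIterate_mul_apply (hm : ∀ t s', m (t + 1) s' = ∑ s, m t s * K s s')
    (g : S → ℝ) (t : ℕ) : ∑ s, m t s * ∑ s', K s s' * g s' = ∑ s', m (t + 1) s' * g s' := by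
  simp only [hm, mul_sum, sum_mul, mul_assoc]
  exact sum_comm

lemma summable_pow_mul_markovIterate (hK0 : ∀ s s', 0 ≤ K s s') (hK1 : ∀ s, ∑ s', K s s' = 1)
    (hm : ∀ t s', m (t + 1) s' = ∑ s, m t s * K s s') (hm0 : ∀ s, 0 ≤ m 0 s)
    (hm1 : ∑ s, m 0 s = 1) {β : ℝ} (hβ0 : 0 ≤ β) (hβ1 : β < 1) (s : S) :
    Summable fun t => β ^ t * m t s := by
  have hnonneg := markovIterate_nonneg hK0 hm hm0
  refine (summable_geometric_of_lt_one hβ0 hβ1).of_nonneg_of_le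
    (fun t => mul_nonneg (pow_nonneg hβ0 t) (hnonneg t s)) fun t => ?_
  have hle : m t s ≤ 1 := by
    rw [← hm1, ← sum_markovIterate hK1 hm t]
    exact single_le_sum (fun s' _ => hnonneg t s') (mem_univ s)
  simpa using mul_le_mul_of_nonneg_left hle (pow_nonneg hβ0 t)

noncomputable def discountedOccupancy (β : ℝ) (m : ℕ → S → ℝ) (s : S) : ℝ := ∑' t, β ^ t * m t s

theorem sum_discountedOccupancy_mul_sub (hK0 : ∀ s s', 0 ≤ K s s')
    (hK1 : ∀ s, ∑ s', K s s' = 1) (hm : ∀ t s', m (t + 1) s' = ∑ s, m t s * K s s')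
    (hm0 : ∀ s, 0 ≤ m 0 s) (hm1 : ∑ s, m 0 s = 1) {β : ℝ} (hβ0 : 0 ≤ β) (hβ1 : β < 1)
    (g : S → ℝ) :
    ∑ s, discountedOccupancy β m s * (g s - β * ∑ s', K s s' * g s') = ∑ s, m 0 s * g s := by
  have hsum := summable_pow_mul_markovIterate hK0 hK1 hm hm0 hm1 hβ0 hβ1
  set u : ℕ → ℝ := fun t => β ^ t * ∑ s, m t s * g s
  have hu : Summable u := by
    simp only [u, mul_sum, ← mul_assoc]
    exact summable_sum fun s _ => (hsum s).mul_right (g s)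
  calc _ = ∑ s, ∑' t, β ^ t * m t s * (g s - β * ∑ s', K s s' * g s') := by
        simp only [discountedOccupancy, tsum_mul_right]
    _ = ∑' t, ∑ s, β ^ t * m t s * (g s - β * ∑ s', K s s' * g s') :=
        (Summable.tsum_finsetSum fun s _ => (hsum s).mul_right _).symm
    _ = ∑' t, (u t - u (t + 1)) := by
        refine tsum_congr fun t => ?_
        simp only [u]
        rw [← sum_markovIterate_mul_apply hm g t, mul_sum, mul_sum, ← sum_sub_distrib]
        exact sum_congr rfl fun s _ => by ring
    _ = _ := by rw [tsum_sub_succ hu]; simp [u]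

end MarkovChain

section Advantage

variable {S A : Type*} [Fintype S] [Fintype A] {π : S → A → ℝ} {P : S → A → S → ℝ}

lemma sum_policy_mul_sum_transition_mul (h : S → ℝ) (s : S) :
    ∑ a, π s a * ∑ s', P s a s' * h s' = ∑ s', (∑ a, π s a * P s a s') * h s' := by
  simp only [mul_sum, sum_mul, mul_assoc]
  exact sum_comm

lemma expected_sq_td_error_eq (C : S → A → S → ℝ) (γ : ℝ) (hπ1 : ∀ s, ∑ a, π s a = 1)
    (hP1 : ∀ s a, ∑ s', P s a s' = 1) {VC SC : S → ℝ}
    (hSC : ∀ s, SC s = ∑ a, π s a * ∑ s', P s a s' *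
      (C s a s' ^ 2 + 2 * γ * C s a s' * VC s' + γ ^ 2 * SC s')) (f : S → ℝ) (s : S) :
    ∑ a, π s a * ∑ s', P s a s' *
        (C s a s' ^ 2 + γ ^ 2 * f s' - f s + 2 * γ * C s a s' * VC s')
      = (SC s - f s) - γ ^ 2 * ∑ s', (∑ a, π s a * P s a s') * (SC s' - f s') := by
  have hlin : ∀ (h : A → S → ℝ) (c : ℝ),
      ∑ a, π s a * ∑ s', P s a s' * (h a s' - c * (SC s' - f s') - f s)
        = ∑ a, π s a * ∑ s', P s a s' * h a s'
          - c * ∑ a, π s a * ∑ s', P s a s' * (SC s' - f s') - f s := by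
    intro h c
    simp only [mul_sub, sum_sub_distrib, ← sum_mul, hP1, one_mul, hπ1, mul_left_comm _ c, ← mul_sum]
  calc _ = ∑ a, π s a * ∑ s', P s a s' * ((C s a s' ^ 2 + 2 * γ * C s a s' * VC s'
          + γ ^ 2 * SC s') - γ ^ 2 * (SC s' - f s') - f s) := by
        refine sum_congr rfl fun a _ => congrArg _ (sum_congr rfl fun s' _ => ?_)
        ring
    _ = _ := by rw [hlin, ← hSC, sum_policy_mul_sum_transition_mul]; ring

end Advantage

theorem square_value_performance_difference_general {S A : Type*} [Fintype S] [Fintype A]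
    [Inhabited S] [Inhabited A]
    (π : S → A → ℝ) (P : S → A → S → ℝ) (C : S → A → S → ℝ) (ρ : S → ℝ) (γ : ℝ)
    (hπ0 : ∀ s a, 0 ≤ π s a) (hπ1 : ∀ s, ∑ a, π s a = 1)
    (hP0 : ∀ s a s', 0 ≤ P s a s') (hP1 : ∀ s a, ∑ s', P s a s' = 1)
    (hρ0 : ∀ s, 0 ≤ ρ s) (hρ1 : ∑ s, ρ s = 1)
    (hγ : γ ∈ Set.Ioo (0 : ℝ) 1)
    (VC SC : S → ℝ)
    (hVC : ∀ s, Filter.Tendsto (fun n => cExp π P C γ n s) Filter.atTop (nhds (VC s)))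
    (hSC : ∀ s, Filter.Tendsto (fun n => sqExp π P C γ n s) Filter.atTop (nhds (SC s)))
    (m : ℕ → S → ℝ) (hm0 : ∀ s, m 0 s = ρ s)
    (hmsucc : ∀ t s', m (t + 1) s' = ∑ s, m t s * ∑ a, π s a * P s a s')
    (d2 : S → ℝ) (hd2 : ∀ s, d2 s = (1 - γ ^ 2) * ∑' t : ℕ, (γ ^ 2) ^ t * m t s)
    (f : S → ℝ) :
    ∑ s, ρ s * SC s =
      (∑ s, ρ s * f s) + (1 / (1 - γ ^ 2)) *
        ∑ s, d2 s * ∑ a, π s a * ∑ s', P s a s' *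
          (C s a s' ^ 2 + γ ^ 2 * f s' - f s + 2 * γ * C s a s' * VC s') := by
  have hγ2 : γ ^ 2 < 1 := pow_lt_one₀ hγ.1.le hγ.2 two_ne_zero
  have hK0 : ∀ s s', 0 ≤ ∑ a, π s a * P s a s' := fun s s' =>
    sum_nonneg fun a _ => mul_nonneg (hπ0 s a) (hP0 s a s')
  have hK1 : ∀ s, ∑ s', ∑ a, π s a * P s a s' = 1 := fun s => by
    rw [sum_comm]
    simp only [← mul_sum, hP1, mul_one, hπ1]
  have hocc := sum_discountedOccupancy_mul_sub hK0 hK1 hmsucc (by simpa [hm0] using hρ0)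
    (by simpa [hm0] using hρ1) (sq_nonneg γ) hγ2
    (fun s => SC s - f s)
  have hδ := expected_sq_td_error_eq C γ hπ1 hP1 (sqValue_bellman C γ hπ1 hP1 hVC hSC) f
  have hd2' : ∀ s, d2 s = (1 - γ ^ 2) * discountedOccupancy (γ ^ 2) m s := hd2
  simp only [hδ, hd2']
  simp only [mul_assoc, ← mul_sum]
  rw [hocc, one_div, inv_mul_cancel_left₀ (sub_pos.2 hγ2).ne', ← sum_add_distrib]
  exact sum_congr rfl fun s _ => by rw [hm0]; ring

/-- Performance-difference-type identity for the square value: for any `f : S → ℝ`,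
`J_S(π) = ⟨ρ, f⟩ + (1/(1-γ²))·⟨d₂^π, δ_f^π⟩`, where
`δ_f^π(s) = E_{π,P}[C(s,a,s')² + γ²f(s') - f(s) + 2γ·C(s,a,s')·V_C^π(s')]`,
`J_S(π) = E_{s∼ρ}[S_C^π(s)]`, and `d₂^π` is the doubly discounted state distribution. -/
theorem square_value_performance_difference {S A : Type*} [Fintype S] [Fintype A]
    [Inhabited S] [Inhabited A]
    (π : S → A → ℝ) (P : S → A → S → ℝ) (C : S → A → S → ℝ) (ρ : S → ℝ) (γ : ℝ)
    (hπ0 : ∀ s a, 0 ≤ π s a) (hπ1 : ∀ s, ∑ a, π s a = 1)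
    (hP0 : ∀ s a s', 0 ≤ P s a s') (hP1 : ∀ s a, ∑ s', P s a s' = 1)
    (hρ0 : ∀ s, 0 ≤ ρ s) (hρ1 : ∑ s, ρ s = 1)
    (hC0 : ∀ s a s', 0 ≤ C s a s') (hCb : ∃ M, ∀ s a s', C s a s' ≤ M)
    (hγ : γ ∈ Set.Ioo (0 : ℝ) 1)
    (VC SC : S → ℝ)
    (hVC : ∀ s, Filter.Tendsto (fun n => cExp π P C γ n s) Filter.atTop (nhds (VC s)))
    (hSC : ∀ s, Filter.Tendsto (fun n => sqExp π P C γ n s) Filter.atTop (nhds (SC s)))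
    (m : ℕ → S → ℝ) (hm0 : ∀ s, m 0 s = ρ s)
    (hmsucc : ∀ t s', m (t + 1) s' = ∑ s, m t s * ∑ a, π s a * P s a s')
    (d2 : S → ℝ) (hd2 : ∀ s, d2 s = (1 - γ ^ 2) * ∑' t : ℕ, (γ ^ 2) ^ t * m t s)
    (f : S → ℝ) :
    ∑ s, ρ s * SC s =
      (∑ s, ρ s * f s) + (1 / (1 - γ ^ 2)) *
        ∑ s, d2 s * ∑ a, π s a * ∑ s', P s a s' *
          (C s a s' ^ 2 + γ ^ 2 * f s' - f s + 2 * γ * C s a s' * VC s') :=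
  square_value_performance_difference_general π P C ρ γ hπ0 hπ1 hP0 hP1 hρ0 hρ1 hγ VC SC hVC hSC m
    hm0 hmsucc d2 hd2 f
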